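/- With the pseudo-metric d on the display poset of an abstract merge tree defined via least upper heights of common ancestors, if the abstract merge tree is regular then d is a metric, i.e. d((a,t),(b,t')) = 0 implies (a,t) = (b,t'). -/
import Mathlib


/-- A persistent set: a functor from the poset `(ℝ, ≤)` to `Sets`. -/
structure PersistentSet where
  obj : ℝ → Type
  map : ∀ {s t : ℝ}, s ≤ t → obj s → obj t
  map_id : ∀ (t : ℝ) (x : obj t), map le_rfl x = x
  map_comp : ∀ {s t u : ℝ} (h₁ : s ≤ t) (h₂ : t ≤ u) (x : obj s),
    map h₂ (map h₁ x) = map (h₁.trans h₂) x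

def IsMergeTreeCriticalSet (S : PersistentSet) (C : Finset ℝ) : Prop :=
  (∀ t : ℝ, (∀ c ∈ C, t < c) → IsEmpty (S.obj t)) ∧
  (∀ t : ℝ, (∀ c ∈ C, c < t) → ∃ x : S.obj t, ∀ y : S.obj t, y = x) ∧
  (∀ (s t : ℝ) (h : s ≤ t), (∀ c ∈ C, c < s ∨ t < c) → Function.Bijective (S.map h))

/-- A (finite) abstract merge tree. -/
def IsAbstractMergeTree (S : PersistentSet) : Prop :=
  (∀ t : ℝ, Finite (S.obj t)) ∧ ∃ C : Finset ℝ, IsMergeTreeCriticalSet S C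

/-- The display poset `D_S = ⋃_t S(t) × {t}`. -/
def Display (S : PersistentSet) : Type := Σ _t : ℝ, S.obj _t

/-- The partial order of the display poset: `(a,t) ≤ (b,t')` iff `t ≤ t'` and
`S(t ≤ t')(a) = b`.  The height of `p : Display S` is `p.1`. -/
def DispLe (S : PersistentSet) (p q : Display S) : Prop :=
  ∃ h : p.1 ≤ q.1, S.map h p.2 = q.2

/-- The pseudo-distance `d((a,t),(b,t')) = (t̃ - t) + (t̃ - t')`, where `t̃` is the
infimum of the heights of common ancestors of the two points. -/
noncomputable def dDisp (S : PersistentSet) (p q : Display S) : ℝ :=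
  2 * sInf {t : ℝ | ∃ r : Display S, DispLe S p r ∧ DispLe S q r ∧ r.1 = t} - p.1 - q.1

/-- `S` is regular: all topological changes happen *at* the critical values. -/
def RegularPS (S : PersistentSet) : Prop :=
  ∀ t : ℝ, ∃ ε > (0 : ℝ), ∀ (t' : ℝ) (h : t ≤ t'), t' < t + ε → Function.Bijective (S.map h)

/-- on the display poset of a *regular* abstract merge tree the
pseudo-metric `dDisp` is a metric: vanishing distance implies equality. -/
theorem dDisp_metric (S : PersistentSet) (hS : IsAbstractMergeTree S)
    (hreg : RegularPS S) (p q : Display S) (h : dDisp S p q = 0) : p = q := by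
  obtain ⟨p1, pa⟩ := p
  obtain ⟨q1, qa⟩ := q
  obtain ⟨hfin, C, hC1, hC2, hC3⟩ := hS
  set A : Set ℝ := {t : ℝ | ∃ r : Display S,
    DispLe S ⟨p1, pa⟩ r ∧ DispLe S ⟨q1, qa⟩ r ∧ r.1 = t} with hA
  obtain ⟨M, hM⟩ := C.exists_le
  set T : ℝ := max M (max p1 q1) + 1 with hT
  have hp1T : p1 ≤ T := by
    have : p1 ≤ max M (max p1 q1) := le_trans (le_max_left _ _) (le_max_right _ _)
    linarith
  have hq1T : q1 ≤ T := by
    have : q1 ≤ max M (max p1 q1) := le_trans (le_max_right _ _) (le_max_right _ _)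
    linarith
  obtain ⟨x, hx⟩ := hC2 T (fun c hc => by
    have := hM c hc
    have : c ≤ max M (max p1 q1) := le_trans this (le_max_left _ _)
    linarith)
  have hAne : A.Nonempty := ⟨T, ⟨T, x⟩, ⟨hp1T, hx _⟩, ⟨hq1T, hx _⟩, rfl⟩
  have hbdd : ∀ t ∈ A, p1 ≤ t ∧ q1 ≤ t := by
    rintro t ⟨r, ⟨h1, _⟩, ⟨h2, _⟩, rfl⟩
    exact ⟨h1, h2⟩
  have hBdd : BddBelow A := ⟨p1, fun t ht => (hbdd t ht).1⟩
  have hInfp : p1 ≤ sInf A := le_csInf hAne (fun t ht => (hbdd t ht).1)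
  have hInfq : q1 ≤ sInf A := le_csInf hAne (fun t ht => (hbdd t ht).2)
  have hd : 2 * sInf A - p1 - q1 = 0 := h
  have hpq : p1 = q1 := by linarith
  subst hpq
  have hInf : sInf A = p1 := by linarith
  obtain ⟨ε, hε, hbij⟩ := hreg p1
  have hlt : sInf A < p1 + ε := by linarith
  obtain ⟨t, htA, htlt⟩ := exists_lt_of_csInf_lt hAne hlt
  obtain ⟨r, ⟨h1, he1⟩, ⟨h2, he2⟩, rfl⟩ := htA
  have hb := hbij r.1 h1 htlt
  have : S.map h1 pa = S.map h1 qa := by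
    rw [he1]
    have : h1 = h2 := rfl
    rw [this, he2]
  have hpq2 : pa = qa := hb.1 this
  rw [hpq2]
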